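/- arXiv:2203.05329 — 2 statements merged into one kernel-verified Lean document; each statement's English description precedes it below -/
import Mathlib

section
/- If (X, d_X) is a separable metric space of asymptotic dimension 0, then there is a countable integral ultrametric space (Y, d) and a coarse equivalence from (X, d_X) to (Y, d). Moreover, if every bounded subset of X has compact closure, then Y can be chosen so that all of its bounded subsets are finite. -/
/-- `d` is a metric on the set `X`. -/
def IsMetricD {X : Type*} (d : X → X → ℝ) : Prop :=
  (∀ x, d x x = 0) ∧ (∀ x y, d x y = 0 → x = y) ∧ (∀ x y, d x y = d y x) ∧
    (∀ x y z, d x z ≤ d x y + d y z)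

/-- the ultrametric (strong triangle) inequality. -/
def IsUltraD {X : Type*} (d : X → X → ℝ) : Prop :=
  ∀ x y z, d x z ≤ max (d x y) (d y z)

/-- There is an `r`-chain joining `a` and `b`. -/
def ChainD {Y : Type*} (d : Y → Y → ℝ) (r : ℝ) (a b : Y) : Prop :=
  ∃ (k : ℕ) (c : ℕ → Y), c 0 = a ∧ c k = b ∧ ∀ i < k, d (c i) (c (i + 1)) < r

/-- asymptotic dimension 0: chains of uniformly bounded gauge are uniformly bounded. -/
def AsDimZeroD {Y : Type*} (d : Y → Y → ℝ) : Prop :=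
  ∀ r > (0 : ℝ), ∃ s > (0 : ℝ), ∀ a b : Y, ChainD d r a b → d a b ≤ s

/-- large scale continuous (uniformly bornologous). -/
def LSCD {X Y : Type*} (dX : X → X → ℝ) (dY : Y → Y → ℝ) (f : X → Y) : Prop :=
  ∀ R > (0 : ℝ), ∃ s > (0 : ℝ), ∀ x y : X, dX x y ≤ R → dY (f x) (f y) ≤ s

/-- uniformly proper. -/
def UnifProperD {X Y : Type*} (dX : X → X → ℝ) (dY : Y → Y → ℝ) (f : X → Y) : Prop :=
  ∀ R > (0 : ℝ), ∃ s > (0 : ℝ), ∀ x y : X, dY (f x) (f y) ≤ R → dX x y ≤ s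

/-- coarsely surjective. -/
def CoarselySurjD {X Y : Type*} (dY : Y → Y → ℝ) (f : X → Y) : Prop :=
  ∃ R > (0 : ℝ), ∀ y : Y, ∃ x : X, dY (f x) y ≤ R

/-- coarse embedding. -/
def CoarseEmbD {X Y : Type*} (dX : X → X → ℝ) (dY : Y → Y → ℝ) (f : X → Y) : Prop :=
  LSCD dX dY f ∧ UnifProperD dX dY f

/-- coarse equivalence. -/
def CoarseEquivD {X Y : Type*} (dX : X → X → ℝ) (dY : Y → Y → ℝ) (f : X → Y) : Prop :=
  LSCD dX dY f ∧ UnifProperD dX dY f ∧ CoarselySurjD dY f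

/-- the induced integral ultrametric `d_f^ul`. -/
noncomputable def dulD {X Y : Type*} (d : Y → Y → ℝ) (f : X → Y) (x y : X) : ℝ :=
  letI := Classical.decEq X
  if x = y then 0 else
    ((sInf {r : ℕ | 1 ≤ r ∧ ChainD d (r : ℝ) (f x) (f y)} : ℕ) : ℝ)

/-- `d` is a metric on the subset `A`. -/
def IsMetricOnD {X : Type*} (d : X → X → ℝ) (A : Set X) : Prop :=
  (∀ x ∈ A, d x x = 0) ∧ (∀ x ∈ A, ∀ y ∈ A, d x y = 0 → x = y) ∧
    (∀ x ∈ A, ∀ y ∈ A, d x y = d y x) ∧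
    (∀ x ∈ A, ∀ y ∈ A, ∀ z ∈ A, d x z ≤ d x y + d y z)

/-- the ultrametric inequality on a subset. -/
def IsUltraOnD {X : Type*} (d : X → X → ℝ) (A : Set X) : Prop :=
  ∀ x ∈ A, ∀ y ∈ A, ∀ z ∈ A, d x z ≤ max (d x y) (d y z)

/-- every triangle is isosceles. -/
def IsoscelesD {X : Type*} (d : X → X → ℝ) : Prop :=
  ∀ x y z : X, d x y = d y z ∨ d x y = d x z ∨ d y z = d x z

/-- every triangle with vertices in `A` is isosceles. -/
def IsoscelesOnD {X : Type*} (d : X → X → ℝ) (A : Set X) : Prop :=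
  ∀ x ∈ A, ∀ y ∈ A, ∀ z ∈ A, d x y = d y z ∨ d x y = d x z ∨ d y z = d x z

/-- a set is bounded with respect to the distance function `d`. -/
def BoundedD {X : Type*} (d : X → X → ℝ) (A : Set X) : Prop :=
  ∃ C : ℝ, ∀ x ∈ A, ∀ y ∈ A, d x y ≤ C

/-- `d` makes the disjoint union `Σ s, X s` a coarse disjoint union of the family
of metrics `ds`. -/
def IsCoarseDisjointUnion {S : Type*} {X : S → Type*} (ds : ∀ s, X s → X s → ℝ)
    (d : (Σ s, X s) → (Σ s, X s) → ℝ) : Prop :=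
  (∀ (s : S) (x y : X s), d ⟨s, x⟩ ⟨s, y⟩ = ds s x y) ∧
    ∀ M > (0 : ℝ), ∃ B : ∀ s, Set (X s),
      (∀ s, BoundedD (ds s) (B s)) ∧ {s | (B s).Nonempty}.Finite ∧
      ∀ (s t : S) (x : X s) (y : X t), s ≠ t → x ∉ B s → y ∉ B t → d ⟨s, x⟩ ⟨t, y⟩ > M

/-!
In a space of asymptotic dimension 0, the chain distance `dulD` (the least integer `n ≥ 1` such
that two points are joined by an `n`-chain) is an integral ultrametric which is coarsely
equivalent to the metric: it is at most `⌈d⌉ + 1`, and by asymptotic dimension 0 a bound on it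
bounds `d`. Restricted to a maximal `1`-separated set `N`, which is a `1`-net and countable by
separability, it gives the model, with a nearest-point retraction `X → N` as the coarse
equivalence. If bounded sets are relatively compact, a bounded subset of `N` is a relatively
compact separated set, hence finite.
-/

open Metric Set Function
open scoped NNReal

namespace ChainD

variable {Y : Type*} {d : Y → Y → ℝ} {r r' : ℝ} {a b c : Y}

lemma refl (d : Y → Y → ℝ) (r : ℝ) (a : Y) : ChainD d r a a :=
  ⟨0, fun _ => a, rfl, rfl, fun _ h => absurd h (Nat.not_lt_zero _)⟩

lemma mono (h : ChainD d r a b) (hr : r ≤ r') : ChainD d r' a b := by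
  obtain ⟨k, c, h0, hk, hs⟩ := h
  exact ⟨k, c, h0, hk, fun i hi => (hs i hi).trans_le hr⟩

lemma of_lt (h : d a b < r) : ChainD d r a b :=
  ⟨1, fun i => if i = 0 then a else b, rfl, rfl, fun i hi => by
    obtain rfl : i = 0 := by omega
    simpa using h⟩

lemma symm (hd : ∀ x y, d x y = d y x) (h : ChainD d r a b) : ChainD d r b a := by
  obtain ⟨k, c, h0, hk, hs⟩ := h
  refine ⟨k, fun i => c (k - i), by simpa using hk, by simpa using h0, fun i hi => ?_⟩
  have hstep := hs (k - (i + 1)) (by omega)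
  rwa [show k - (i + 1) + 1 = k - i by omega, hd] at hstep

lemma trans (h₁ : ChainD d r a b) (h₂ : ChainD d r b c) : ChainD d r a c := by
  obtain ⟨k, p, hp0, hpk, hps⟩ := h₁
  obtain ⟨l, q, hq0, hql, hqs⟩ := h₂
  set s : ℕ → Y := fun i => if i < k then p i else q (i - k) with hs
  have hs_le : ∀ i ≤ k, s i = p i := by
    intro i hi
    by_cases h : i < k
    · simp [hs, h]
    · simp [hs, show i = k by omega, hq0, hpk]
  have hs_ge : ∀ i, k ≤ i → s i = q (i - k) := fun i hi => by simp [hs, show ¬ i < k by omega]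
  refine ⟨k + l, s, by rw [hs_le 0 k.zero_le, hp0], by rw [hs_ge _ le_self_add]; simpa, ?_⟩
  intro i hi
  by_cases hik : i < k
  · rw [hs_le i hik.le, hs_le (i + 1) hik]
    exact hps i hik
  · rw [hs_ge i (by omega), hs_ge (i + 1) (by omega), show i + 1 - k = i - k + 1 by omega]
    exact hqs (i - k) (by omega)

end ChainD

def chainGauges {Y : Type*} (d : Y → Y → ℝ) (a b : Y) : Set ℕ :=
  {r : ℕ | 1 ≤ r ∧ ChainD d r a b}

section dulD

variable {X Y : Type*} {d : Y → Y → ℝ} {f : X → Y} {x y z : X}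

lemma ceil_add_one_mem_chainGauges (d : Y → Y → ℝ) (a b : Y) :
    ⌈d a b⌉₊ + 1 ∈ chainGauges d a b := by
  refine ⟨Nat.le_add_left 1 _, ChainD.of_lt ?_⟩
  push_cast
  linarith [Nat.le_ceil (d a b)]

lemma dulD_self (x : X) : dulD d f x x = 0 := by
  simp [dulD]

lemma dulD_of_ne (h : x ≠ y) : dulD d f x y = (sInf (chainGauges d (f x) (f y)) : ℕ) := by
  simp [dulD, chainGauges, h]

lemma sInf_chainGauges_mem (a b : Y) : sInf (chainGauges d a b) ∈ chainGauges d a b :=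
  Nat.sInf_mem ⟨_, ceil_add_one_mem_chainGauges d a b⟩

lemma exists_dulD_eq_natCast (x y : X) : ∃ n : ℕ, dulD d f x y = n := by
  by_cases h : x = y
  · exact ⟨0, by simp [h, dulD_self]⟩
  · exact ⟨_, dulD_of_ne h⟩

lemma dulD_nonneg (x y : X) : 0 ≤ dulD d f x y := by
  obtain ⟨n, hn⟩ := exists_dulD_eq_natCast (d := d) (f := f) x y
  exact hn ▸ n.cast_nonneg

lemma one_le_dulD (h : x ≠ y) : 1 ≤ dulD d f x y := by
  rw [dulD_of_ne h]
  exact_mod_cast (sInf_chainGauges_mem _ _).1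

lemma chainD_dulD (h : x ≠ y) : ChainD d (dulD d f x y) (f x) (f y) := by
  rw [dulD_of_ne h]
  exact (sInf_chainGauges_mem _ _).2

lemma chainD_of_dulD_le {R : ℝ} (hR : dulD d f x y ≤ R) : ChainD d R (f x) (f y) := by
  by_cases h : x = y
  · exact h ▸ ChainD.refl d R (f x)
  · exact (chainD_dulD h).mono hR

lemma dulD_le_of_mem_chainGauges {n : ℕ} (hn : n ∈ chainGauges d (f x) (f y)) :
    dulD d f x y ≤ n := by
  by_cases h : x = y
  · rw [h, dulD_self]
    exact n.cast_nonneg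
  · rw [dulD_of_ne h]
    exact_mod_cast Nat.sInf_le hn

lemma dulD_le_ceil_add_one (x y : X) : dulD d f x y ≤ ⌈d (f x) (f y)⌉₊ + 1 := by
  exact_mod_cast dulD_le_of_mem_chainGauges (ceil_add_one_mem_chainGauges d (f x) (f y))

lemma exists_le_of_dulD_le (hY : AsDimZeroD d) {R : ℝ} (hR : 0 < R) :
    ∃ s > 0, ∀ x y : X, dulD d f x y ≤ R → d (f x) (f y) ≤ s := by
  obtain ⟨s, hs, hchain⟩ := hY R hR
  exact ⟨s, hs, fun x y h => hchain _ _ (chainD_of_dulD_le h)⟩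

lemma eq_of_dulD_eq_zero (h : dulD d f x y = 0) : x = y := by
  by_contra hxy
  linarith [one_le_dulD (d := d) (f := f) hxy]

lemma dulD_comm (hd : ∀ a b, d a b = d b a) (x y : X) : dulD d f x y = dulD d f y x := by
  have hgauges : chainGauges d (f x) (f y) = chainGauges d (f y) (f x) := by
    ext n
    exact and_congr_right fun _ => ⟨ChainD.symm hd, ChainD.symm hd⟩
  by_cases h : x = y
  · rw [h]
  · rw [dulD_of_ne h, dulD_of_ne (Ne.symm h), hgauges]

lemma isUltraD_dulD : IsUltraD (dulD d f) := by
  intro x y z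
  by_cases hxy : x = y
  · rw [hxy]
    exact le_max_right _ _
  by_cases hyz : y = z
  · rw [hyz]
    exact le_max_left _ _
  obtain ⟨m, hm⟩ := exists_dulD_eq_natCast (d := d) (f := f) x y
  obtain ⟨n, hn⟩ := exists_dulD_eq_natCast (d := d) (f := f) y z
  have hm1 : 1 ≤ m := by exact_mod_cast hm ▸ one_le_dulD hxy
  have hmem : max m n ∈ chainGauges d (f x) (f z) := by
    refine ⟨le_max_of_le_left hm1, (chainD_of_dulD_le (y := y) ?_).trans (chainD_of_dulD_le ?_)⟩
    · rw [hm]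
      exact_mod_cast le_max_left m n
    · rw [hn]
      exact_mod_cast le_max_right m n
  calc dulD d f x z ≤ (max m n : ℕ) := dulD_le_of_mem_chainGauges hmem
    _ = max (dulD d f x y) (dulD d f y z) := by rw [hm, hn, Nat.cast_max]

lemma isMetricD_dulD (hd : ∀ a b, d a b = d b a) : IsMetricD (dulD d f) :=
  ⟨dulD_self, fun _ _ => eq_of_dulD_eq_zero, dulD_comm hd, fun x y z =>
    (isUltraD_dulD x y z).trans
      (max_le_add_of_nonneg (dulD_nonneg x y) (dulD_nonneg y z))⟩

end dulD

section Retract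

variable {X Y : Type*} [PseudoMetricSpace X] {ι : Y → X} {r : X → Y} {c : ℝ≥0}

theorem coarseEquivD_dulD (hX : AsDimZeroD (dist : X → X → ℝ))
    (hr : ∀ x, dist x (ι (r x)) ≤ c) : CoarseEquivD dist (dulD dist ι) r := by
  refine ⟨fun R hR => ⟨⌈R + 2 * c⌉₊ + 1, by positivity, fun x y hxy => ?_⟩,
    fun R hR => ?_, ⟨⌈(c : ℝ)⌉₊ + 1, by positivity, fun y => ⟨ι y, ?_⟩⟩⟩
  · have hdist : dist (ι (r x)) (ι (r y)) ≤ R + 2 * c := by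
      linarith [dist_triangle4 (ι (r x)) x y (ι (r y)), dist_comm x (ι (r x)), hr x, hr y]
    exact (dulD_le_ceil_add_one (r x) (r y)).trans (by gcongr)
  · obtain ⟨s, hs, hle⟩ := exists_le_of_dulD_le hX hR
    refine ⟨s + 2 * c, by positivity, fun x y hxy => ?_⟩
    linarith [dist_triangle4 x (ι (r x)) (ι (r y)) y, dist_comm y (ι (r y)), hr x, hr y,
      hle _ _ hxy]
  · have hdist : dist (ι (r (ι y))) (ι y) ≤ c := dist_comm (ι y) _ ▸ hr (ι y)
    exact (dulD_le_ceil_add_one _ _).trans (by gcongr)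

end Retract

namespace Metric

variable {X : Type*} [PseudoEMetricSpace X] {ε : ℝ≥0} {s : Set X}

variable (X) in
lemma exists_isSeparated_isCover (ε : ℝ≥0) :
    ∃ N : Set X, IsSeparated ε N ∧ IsCover ε univ N := by
  obtain ⟨N, hN⟩ := zorn_subset {N : Set X | N ⊆ univ ∧ IsSeparated ε N} fun c hc hchain =>
    ⟨⋃₀ c, ⟨subset_univ _, hchain.pairwise_sUnion.2 fun s hs => (hc hs).2⟩,
      fun _ => subset_sUnion_of_mem⟩
  exact ⟨N, hN.prop.2, .of_maximal_isSeparated hN⟩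

lemma IsSeparated.countable [TopologicalSpace.SeparableSpace X] (hε : ε ≠ 0)
    (hs : IsSeparated ε s) : s.Countable := by
  refine Set.PairwiseDisjoint.countable_of_isOpen (s := fun x => eball x (ε / 2))
    (fun x hx y hy hxy => eball_disjoint ?_) (fun _ _ => isOpen_eball)
    (fun x _ => ⟨x, mem_eball_self (by simpa [pos_iff_ne_zero] using hε)⟩)
  rw [ENNReal.add_halves]
  exact (hs hx hy hxy).le

lemma IsSeparated.subset_of_isCover {N : Set X} (hs : IsSeparated ε s) (hN : IsCover ε s N)
    (hNs : N ⊆ s) : s ⊆ N := by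
  intro x hx
  obtain ⟨n, hn, hxn⟩ := hN hx
  by_contra hxN
  exact (hs hx (hNs hn) (ne_of_mem_of_not_mem hn hxN).symm).not_ge hxn

lemma IsSeparated.finite_of_isCompact_closure (hε : ε ≠ 0) (hs : IsSeparated ε s)
    (hc : IsCompact (closure s)) : s.Finite := by
  obtain ⟨N, hNs, hN, hcover⟩ := exists_finite_isCover_of_isCompact_closure hε hc
  exact hN.subset (hs.subset_of_isCover hcover hNs)

end Metric

lemma finite_of_boundedD_dulD {X Y : Type*} [PseudoMetricSpace X]
    (hX : AsDimZeroD (dist : X → X → ℝ))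
    (hcompact : ∀ B : Set X, Bornology.IsBounded B → IsCompact (closure B))
    {ι : Y → X} (hι : Injective ι) {ε : ℝ≥0} (hε : ε ≠ 0) (hsep : IsSeparated ε (range ι))
    {B : Set Y} (hB : BoundedD (dulD dist ι) B) : B.Finite := by
  obtain ⟨C, hC⟩ := hB
  obtain ⟨s, -, hle⟩ := exists_le_of_dulD_le hX (lt_max_of_lt_right one_pos : (0 : ℝ) < max C 1)
  have hbounded : Bornology.IsBounded (ι '' B) := by
    refine isBounded_iff.2 ⟨s, ?_⟩
    rintro _ ⟨y, hy, rfl⟩ _ ⟨y', hy', rfl⟩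
    exact hle y y' ((hC y hy y' hy').trans (le_max_left C 1))
  have himage : (ι '' B).Finite :=
    (hsep.subset (image_subset_range ι B)).finite_of_isCompact_closure hε (hcompact _ hbounded)
  exact himage.of_finite_image hι.injOn

/-- A separable metric space of asymptotic dimension 0 is coarsely
equivalent to a countable integral ultrametric space; if moreover bounded subsets of `X`
have compact closure, the target can be chosen with all bounded subsets finite. -/
theorem separable_asdim_zero_coarse_equiv_countable_integral_ultrametric
    {X : Type*} [MetricSpace X] [TopologicalSpace.SeparableSpace X]
    (h : AsDimZeroD (dist : X → X → ℝ)) :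
    (∃ (Y : Type) (dY : Y → Y → ℝ), Countable Y ∧ IsMetricD dY ∧ IsUltraD dY ∧
        (∀ a b : Y, ∃ n : ℕ, dY a b = (n : ℝ)) ∧
        ∃ f : X → Y, CoarseEquivD (dist : X → X → ℝ) dY f) ∧
    ((∀ B : Set X, Bornology.IsBounded B → IsCompact (closure B)) →
      ∃ (Y : Type) (dY : Y → Y → ℝ), Countable Y ∧ IsMetricD dY ∧ IsUltraD dY ∧
        (∀ a b : Y, ∃ n : ℕ, dY a b = (n : ℝ)) ∧
        (∀ B : Set Y, BoundedD dY B → B.Finite) ∧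
        ∃ f : X → Y, CoarseEquivD (dist : X → X → ℝ) dY f) := by
  obtain ⟨N, hsep, hcover⟩ := exists_isSeparated_isCover X 1
  have : Countable N := (hsep.countable one_ne_zero).to_subtype
  let e : N ≃ Shrink.{0} N := equivShrink _
  let ι : Shrink.{0} N → X := fun y => e.symm y
  have hι : Injective ι := Subtype.val_injective.comp e.symm.injective
  have hrange : range ι = N := by
    rw [range_comp' Subtype.val e.symm, e.symm.range_eq_univ, image_univ, Subtype.range_coe]
  choose p hpN hp using fun x => hcover (mem_univ x)
  let r : X → Shrink.{0} N := fun x => e ⟨p x, hpN x⟩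
  have hr : ∀ x, dist x (ι (r x)) ≤ (1 : ℝ≥0) := fun x => by
    simpa [ι, r, edist_dist] using hp x
  have hequiv := coarseEquivD_dulD h hr
  have hcountable : Countable (Shrink.{0} N) := Countable.of_equiv _ e
  have hmetric := isMetricD_dulD (f := ι) dist_comm
  refine ⟨⟨_, _, hcountable, hmetric, isUltraD_dulD, exists_dulD_eq_natCast, r, hequiv⟩,
    fun hcompact => ⟨_, _, hcountable, hmetric, isUltraD_dulD, exists_dulD_eq_natCast,
      fun B => finite_of_boundedD_dulD h hcompact hι one_ne_zero (hrange.symm ▸ hsep), r, hequiv⟩⟩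
end

section
/- Let f : X → S be a surjective function from a set X onto a metric space (S, d_S), let d_t be a metric on each fiber f^{-1}(t), let g : S → X be a section of f, and let d be the splicing of the metrics d_t along g. Then d is a metric on X. Moreover, if d_S and all the fiber metrics d_t are ultrametrics, then d is an ultrametric. -/
/-!
Within a fiber the spliced distance is the fiber metric. Across fibers it is the maximum of the
base distance and the distances of both points to the base points `g t` of their fibers, so it
dominates each of these three quantities. Every triangle inequality of the splicing therefore
reduces to one in the base or in a single fiber, passing through a base point when two of the
three points share a fiber. This only uses that `+` and `max` are monotone, commutative and
increasing under nonnegative arguments, so both inequalities are proved at once for such an `op`.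
-/

section Splicing

variable {X S : Type*}

theorem IsMetricD.nonneg {d : X → X → ℝ} (h : IsMetricD d) (x y : X) : 0 ≤ d x y := by
  have := h.2.2.2 x y x
  rw [h.1 x, h.2.2.1 y x] at this
  linarith

theorem IsMetricOnD.nonneg {d : X → X → ℝ} {A : Set X} (h : IsMetricOnD d A) {x y : X}
    (hx : x ∈ A) (hy : y ∈ A) : 0 ≤ d x y := by
  have := h.2.2.2 x hx y hy x hx
  rw [h.1 x hx, h.2.2.1 y hy x hx] at this
  linarith

structure IsSplicing (f : X → S) (dS : S → S → ℝ) (dt : S → X → X → ℝ) (g : S → X)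
    (d : X → X → ℝ) : Prop where
  apply_of_eq : ∀ x y, f x = f y → d x y = dt (f x) x y
  apply_of_ne : ∀ x y, f x ≠ f y →
    d x y = max (dS (f x) (f y)) (max (dt (f x) x (g (f x))) (dt (f y) y (g (f y))))

namespace IsSplicing

variable {f : X → S} {dS : S → S → ℝ} {dt : S → X → X → ℝ} {g : S → X} {d : X → X → ℝ}
  {op : ℝ → ℝ → ℝ} {x y z : X}

theorem apply_of_ne_eq_max_dist_section (hd : IsSplicing f dS dt g d) (hsec : ∀ s, f (g s) = s)
    (h : f x ≠ f y) :
    d x y = max (dS (f x) (f y)) (max (d x (g (f x))) (d y (g (f y)))) := by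
  rw [hd.apply_of_ne x y h, hd.apply_of_eq x _ (hsec _).symm,
    hd.apply_of_eq y _ (hsec _).symm]

theorem dist_base_le_of_ne (hd : IsSplicing f dS dt g d) (hsec : ∀ s, f (g s) = s)
    (h : f x ≠ f y) : dS (f x) (f y) ≤ d x y := by
  rw [hd.apply_of_ne_eq_max_dist_section hsec h]
  exact le_max_left _ _

theorem dist_section_left_le_of_ne (hd : IsSplicing f dS dt g d) (hsec : ∀ s, f (g s) = s)
    (h : f x ≠ f y) : d x (g (f x)) ≤ d x y := by
  rw [hd.apply_of_ne_eq_max_dist_section hsec h]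
  exact le_max_of_le_right (le_max_left _ _)

theorem dist_section_right_le_of_ne (hd : IsSplicing f dS dt g d) (hsec : ∀ s, f (g s) = s)
    (h : f x ≠ f y) : d y (g (f y)) ≤ d x y := by
  rw [hd.apply_of_ne_eq_max_dist_section hsec h]
  exact le_max_of_le_right (le_max_right _ _)

theorem apply_self (hd : IsSplicing f dS dt g d)
    (hfib : ∀ t, IsMetricOnD (dt t) {x | f x = t}) (x : X) : d x x = 0 := by
  rw [hd.apply_of_eq x x rfl]
  exact (hfib (f x)).1 x rfl

theorem nonneg (hd : IsSplicing f dS dt g d) (hS : IsMetricD dS)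
    (hfib : ∀ t, IsMetricOnD (dt t) {x | f x = t}) (x y : X) : 0 ≤ d x y := by
  by_cases h : f x = f y
  · rw [hd.apply_of_eq x y h]
    exact (hfib (f x)).nonneg rfl h.symm
  · rw [hd.apply_of_ne x y h]
    exact le_max_of_le_left (hS.nonneg _ _)

theorem symm (hd : IsSplicing f dS dt g d) (hS : IsMetricD dS)
    (hfib : ∀ t, IsMetricOnD (dt t) {x | f x = t}) (x y : X) : d x y = d y x := by
  by_cases h : f x = f y
  · rw [hd.apply_of_eq x y h, hd.apply_of_eq y x h.symm, ← h]
    exact (hfib (f x)).2.2.1 x rfl y h.symm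
  · rw [hd.apply_of_ne x y h, hd.apply_of_ne y x (Ne.symm h), hS.2.2.1, max_comm (dt (f x) _ _)]

theorem eq_of_apply_eq_zero (hd : IsSplicing f dS dt g d) (hS : IsMetricD dS)
    (hfib : ∀ t, IsMetricOnD (dt t) {x | f x = t}) (x y : X) (hxy : d x y = 0) : x = y := by
  by_cases h : f x = f y
  · rw [hd.apply_of_eq x y h] at hxy
    exact (hfib (f x)).2.1 x rfl y h.symm hxy
  · rw [hd.apply_of_ne x y h] at hxy
    exact absurd (hS.2.1 _ _ (le_antisymm (hxy ▸ le_max_left _ _) (hS.nonneg _ _))) h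

theorem le_op_of_fiber (hd : IsSplicing f dS dt g d)
    (hop : ∀ t, ∀ x ∈ {x | f x = t}, ∀ y ∈ {x | f x = t}, ∀ z ∈ {x | f x = t},
      dt t x z ≤ op (dt t x y) (dt t y z))
    (hxy : f x = f y) (hyz : f y = f z) : d x z ≤ op (d x y) (d y z) := by
  rw [hd.apply_of_eq x z (hxy.trans hyz), hd.apply_of_eq x y hxy, hd.apply_of_eq y z hyz, ← hxy]
  exact hop (f x) x rfl y hxy.symm z (hxy.trans hyz).symm

theorem le_op_of_eq_of_ne (hmono : ∀ {a b a' b'}, a ≤ a' → b ≤ b' → op a b ≤ op a' b')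
    (hcomm : ∀ a b, op a b = op b a) (hle : ∀ {a b}, 0 ≤ b → a ≤ op a b)
    (hd : IsSplicing f dS dt g d) (hsec : ∀ s, f (g s) = s)
    (hnn : ∀ x y, 0 ≤ d x y)
    (hfibop : ∀ x y z, f x = f y → f y = f z → d x z ≤ op (d x y) (d y z))
    (hxy : f x = f y) (hyz : f y ≠ f z) : d x z ≤ op (d x y) (d y z) := by
  have hxz : f x ≠ f z := hxy ▸ hyz
  have le_op_right : ∀ {a}, a ≤ d y z → a ≤ op (d x y) (d y z) := fun h =>
    (hcomm _ _).symm ▸ h.trans (hle (hnn x y))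
  rw [hd.apply_of_ne_eq_max_dist_section hsec hxz]
  refine max_le (le_op_right (hxy ▸ hd.dist_base_le_of_ne hsec hyz))
    (max_le ?_ (le_op_right (hd.dist_section_right_le_of_ne hsec hyz)))
  calc d x (g (f x)) ≤ op (d x y) (d y (g (f y))) := by
        rw [← hxy]
        exact hfibop x y _ hxy (by rw [hsec, hxy])
    _ ≤ op (d x y) (d y z) := hmono le_rfl (hd.dist_section_left_le_of_ne hsec hyz)

theorem le_op (hmono : ∀ {a b a' b'}, a ≤ a' → b ≤ b' → op a b ≤ op a' b')
    (hcomm : ∀ a b, op a b = op b a) (hle : ∀ {a b}, 0 ≤ b → a ≤ op a b)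
    (hd : IsSplicing f dS dt g d) (hsec : ∀ s, f (g s) = s)
    (hnn : ∀ x y, 0 ≤ d x y) (hsymm : ∀ x y, d x y = d y x)
    (hSop : ∀ u v w, dS u w ≤ op (dS u v) (dS v w))
    (hfibop : ∀ x y z, f x = f y → f y = f z → d x z ≤ op (d x y) (d y z)) (x y z : X) :
    d x z ≤ op (d x y) (d y z) := by
  have le_op_left : ∀ {a}, a ≤ d x y → a ≤ op (d x y) (d y z) := fun h => h.trans (hle (hnn y z))
  have le_op_right : ∀ {a}, a ≤ d y z → a ≤ op (d x y) (d y z) := fun h =>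
    (hcomm _ _).symm ▸ h.trans (hle (hnn x y))
  by_cases hxy : f x = f y <;> by_cases hyz : f y = f z
  · exact hfibop x y z hxy hyz
  · exact hd.le_op_of_eq_of_ne hmono hcomm hle hsec hnn hfibop hxy hyz
  · rw [hsymm x z, hsymm x y, hsymm y z, hcomm]
    exact hd.le_op_of_eq_of_ne hmono hcomm hle hsec hnn hfibop hyz.symm (Ne.symm hxy)
  by_cases hxz : f x = f z
  ·     calc d x z ≤ op (d x (g (f x))) (d (g (f x)) z) :=
          hfibop x _ z (hsec _).symm (by rw [hsec, hxz])
      _ ≤ op (d x y) (d y z) := by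
          refine hmono (hd.dist_section_left_le_of_ne hsec hxy) ?_
          rw [hsymm, hxz]
          exact hd.dist_section_right_le_of_ne hsec hyz
  · rw [hd.apply_of_ne_eq_max_dist_section hsec hxz]
    refine max_le ?_ (max_le (le_op_left (hd.dist_section_left_le_of_ne hsec hxy))
      (le_op_right (hd.dist_section_right_le_of_ne hsec hyz)))
    exact (hSop _ (f y) _).trans
      (hmono (hd.dist_base_le_of_ne hsec hxy) (hd.dist_base_le_of_ne hsec hyz))

end IsSplicing

end Splicing

theorem splicing_is_metric_general
    {X S : Type*} (f : X → S) (dS : S → S → ℝ) (dt : S → X → X → ℝ)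
    (g : S → X) (d : X → X → ℝ)
    (hsec : ∀ s : S, f (g s) = s)
    (hS : IsMetricD dS) (hfib : ∀ t : S, IsMetricOnD (dt t) {x | f x = t})
    (hd1 : ∀ x y : X, f x = f y → d x y = dt (f x) x y)
    (hd2 : ∀ x y : X, f x ≠ f y →
      d x y = max (dS (f x) (f y))
        (max (dt (f x) x (g (f x))) (dt (f y) y (g (f y))))) :
    IsMetricD d ∧
      (IsUltraD dS → (∀ t : S, IsUltraOnD (dt t) {x | f x = t}) → IsUltraD d) := by
  have hd : IsSplicing f dS dt g d := ⟨hd1, hd2⟩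
  have hnn := hd.nonneg hS hfib
  have hsymm := hd.symm hS hfib
  refine ⟨⟨hd.apply_self hfib, hd.eq_of_apply_eq_zero hS hfib, hsymm, ?_⟩, fun hSu hfibu => ?_⟩
  · exact hd.le_op add_le_add add_comm le_add_of_nonneg_right hsec hnn hsymm hS.2.2.2
      (fun _ _ _ => hd.le_op_of_fiber fun t => (hfib t).2.2.2)
  · exact hd.le_op max_le_max max_comm (fun _ => le_max_left _ _) hsec hnn hsymm hSu
      (fun _ _ _ => hd.le_op_of_fiber hfibu)

/-- The splicing of metrics on the fibers of a surjection `f : X → (S, d_S)`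
along a section `g` is a metric; if the base metric and all fiber metrics are ultrametrics,
the splicing is an ultrametric. -/
theorem splicing_is_metric
    {X S : Type*} (f : X → S) (dS : S → S → ℝ) (dt : S → X → X → ℝ)
    (g : S → X) (d : X → X → ℝ)
    (hsurj : Function.Surjective f) (hsec : ∀ s : S, f (g s) = s)
    (hS : IsMetricD dS) (hfib : ∀ t : S, IsMetricOnD (dt t) {x | f x = t})
    (hd1 : ∀ x y : X, f x = f y → d x y = dt (f x) x y)
    (hd2 : ∀ x y : X, f x ≠ f y →
      d x y = max (dS (f x) (f y))
        (max (dt (f x) x (g (f x))) (dt (f y) y (g (f y))))) :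
    IsMetricD d ∧
      (IsUltraD dS → (∀ t : S, IsUltraOnD (dt t) {x | f x = t}) → IsUltraD d) :=
  splicing_is_metric_general f dS dt g d hsec hS hfib hd1 hd2
end
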